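/- Consider the iterated local max algorithm on a finite simple graph G with m edges, where in each round the surviving edges are ranked by an independent, uniformly random linear order. Then for every k ≥ 0, the probability that the algorithm has not yet terminated after k rounds satisfies P(|E(G_k)| ≥ 1) ≤ m · 2^{-k}; in particular, the expected number of rounds until the edge set is empty is at most log₂(m) + 2. -/

import Mathlib

open Classical

/-- Two edges of a graph share an endpoint. -/
def shareEndpoint {V : Type*} (e f : Sym2 V) : Prop := ∃ v, v ∈ e ∧ v ∈ f

variable {V : Type*} [Fintype V] [DecidableEq V]

/-- A ranking of the edges of `G`: a bijection `E(G) ≃ {1, …, m}`. A uniformly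
random such ranking induces a uniformly random linear order on any subset of the
edges, in particular on the surviving edges of any round. -/
abbrev EdgeRanking (G : SimpleGraph V) [DecidableRel G.Adj] : Type _ :=
  {e : Sym2 V // e ∈ G.edgeFinset} ≃ Fin G.edgeFinset.card

/-- The rank of an edge under a ranking (arbitrary value on non-edges). -/
noncomputable def rk (G : SimpleGraph V) [DecidableRel G.Adj] (σ : EdgeRanking G)
    (e : Sym2 V) : ℕ :=
  if h : e ∈ G.edgeFinset then (σ ⟨e, h⟩ : ℕ) else 0

/-- An edge `e` of the surviving subgraph with edge set `E` is locally maximal under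
the ranking `σ`: `e ∈ E` and the rank of `e` is larger than the rank of any other
edge of `E` sharing an endpoint with `e`. -/
def locMaxInR (G : SimpleGraph V) [DecidableRel G.Adj] (σ : EdgeRanking G)
    (E : Finset (Sym2 V)) (e : Sym2 V) : Prop :=
  e ∈ E ∧ ∀ f ∈ E, f ≠ e → shareEndpoint e f → rk G σ f < rk G σ e

/-- One round of the local max algorithm under the ranking `σ`: remove every edge
sharing an endpoint with some locally maximal edge (including the locally maximal
edges themselves). -/
noncomputable def stepR (G : SimpleGraph V) [DecidableRel G.Adj] (σ : EdgeRanking G)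
    (E : Finset (Sym2 V)) : Finset (Sym2 V) :=
  E.filter fun f => ¬ ∃ e, locMaxInR G σ E e ∧ shareEndpoint e f

/-- The edge set of the graph `G_k` after `k` rounds of the iterated local max
algorithm, where round `i` uses the fresh random ranking `σs i`. -/
noncomputable def EseqR (G : SimpleGraph V) [DecidableRel G.Adj]
    (σs : ℕ → EdgeRanking G) : ℕ → Finset (Sym2 V)
  | 0 => G.edgeFinset
  | n + 1 => stepR G (σs n) (EseqR G σs n)

/-- Extend a finite tuple of rankings to an infinite sequence (rounds `≥ k` get a
fixed dummy ranking; they are irrelevant for the first `k` rounds). -/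
noncomputable def pad (G : SimpleGraph V) [DecidableRel G.Adj] {k : ℕ}
    (σs : Fin k → EdgeRanking G) : ℕ → EdgeRanking G := fun i =>
  if h : i < k then σs ⟨i, h⟩ else Fintype.equivFinOfCardEq (Fintype.card_coe _)

/-- The number of rounds of the iterated local max algorithm: the least `k` with
`E(G_k) = ∅`. -/
noncomputable def nRounds (G : SimpleGraph V) [DecidableRel G.Adj]
    (σs : ℕ → EdgeRanking G) : ℕ :=
  sInf {k | EseqR G σs k = ∅}

/-! Fix the edge set `E` surviving some round. Under a uniformly random ranking, an edge
`e ∈ E` is locally maximal with probability exactly `1 / d(e)`, where `d(e)` counts the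
edges of `E` meeting `e` (itself included), and it then removes those `d(e)` edges. Locally
maximal edges form a matching, so each removed edge is charged at most twice; hence a round
removes at least half of the surviving edges in expectation, `E |E(G_k)| ≤ m 2^{-k}`, and
Markov's inequality gives the tail bound. Since the algorithm stops within `m` rounds, the
expected number of rounds is `∑_{k < m} P(|E(G_k)| ≥ 1) ≤ ∑_{k < m} min(1, m 2^{-k})`, which
is at most `log₂ m + 2` after splitting the sum at `k = ⌈log₂ m⌉`. -/

open Finset

section Argmax

variable {α β : Type*} [LinearOrder β]

def IsArgmaxOn (σ : α ≃ β) (S : Finset α) (x : α) : Prop :=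
  ∀ y ∈ S, y ≠ x → σ y < σ x

theorem IsArgmaxOn.eq {σ : α ≃ β} {S : Finset α} {x y : α} (hx : IsArgmaxOn σ S x)
    (hy : IsArgmaxOn σ S y) (hxS : x ∈ S) (hyS : y ∈ S) : x = y := by
  by_contra hne
  exact lt_asymm (hx y hyS (Ne.symm hne)) (hy x hxS hne)

theorem exists_isArgmaxOn (σ : α ≃ β) {S : Finset α} (hS : S.Nonempty) :
    ∃ x ∈ S, IsArgmaxOn σ S x := by
  obtain ⟨x, hx, hmax⟩ := S.exists_max_image σ hS
  exact ⟨x, hx, fun y hy hne => (hmax y hy).lt_of_ne (σ.injective.ne hne)⟩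

theorem IsArgmaxOn.swap_trans [DecidableEq α] {σ : α ≃ β} {S : Finset α} {x y : α}
    (h : IsArgmaxOn σ S x) (hy : y ∈ S) : IsArgmaxOn ((Equiv.swap x y).trans σ) S y := by
  intro z hz hzy
  simp only [Equiv.trans_apply, Equiv.swap_apply_right]
  refine h _ ?_ (by rwa [Ne, Equiv.swap_apply_eq_iff, Equiv.swap_apply_left])
  rw [Equiv.swap_apply_def]
  split_ifs <;> assumption

theorem card_isArgmaxOn_mul_card [Fintype α] [DecidableEq α] [Fintype β] {S : Finset α} {x : α}
    (hx : x ∈ S) : #{σ : α ≃ β | IsArgmaxOn σ S x} * #S = Fintype.card (α ≃ β) := by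
  have unique (σ : α ≃ β) : #{y ∈ S | IsArgmaxOn σ S y} = 1 := by
    obtain ⟨y, hyS, hy⟩ := exists_isArgmaxOn σ ⟨x, hx⟩
    refine card_eq_one.2 ⟨y, eq_singleton_iff_unique_mem.2 ⟨mem_filter.2 ⟨hyS, hy⟩, ?_⟩⟩
    exact fun z hz => (mem_filter.1 hz).2.eq hy (mem_filter.1 hz).1 hyS
  have equal (y : α) (hy : y ∈ S) :
      #{σ : α ≃ β | IsArgmaxOn σ S y} = #{σ : α ≃ β | IsArgmaxOn σ S x} := by
    refine card_bij' (fun σ _ => (Equiv.swap x y).trans σ) (fun σ _ => (Equiv.swap x y).trans σ)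
      (fun σ hσ => ?_) (fun σ hσ => ?_) (fun σ _ => ?_) (fun σ _ => ?_)
    · rw [Equiv.swap_comm]
      exact (mem_filter_univ _).2 (((mem_filter_univ _).1 hσ).swap_trans hx)
    · exact (mem_filter_univ _).2 (((mem_filter_univ _).1 hσ).swap_trans hy)
    all_goals ext; simp
  calc #{σ : α ≃ β | IsArgmaxOn σ S x} * #S
      = ∑ y ∈ S, #{σ : α ≃ β | IsArgmaxOn σ S y} := by
        rw [sum_congr rfl equal, sum_const, smul_eq_mul, mul_comm]
    _ = ∑ σ : α ≃ β, #{y ∈ S | IsArgmaxOn σ S y} :=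
        (sum_card_bipartiteAbove_eq_sum_card_bipartiteBelow _).symm
    _ = Fintype.card (α ≃ β) := by simp [unique]

end Argmax

theorem shareEndpoint_self {W : Type*} (e : Sym2 W) : shareEndpoint e e :=
  ⟨e.out.1, e.out_fst_mem, e.out_fst_mem⟩

theorem shareEndpoint_comm {W : Type*} {e f : Sym2 W} (h : shareEndpoint e f) :
    shareEndpoint f e :=
  let ⟨v, he, hf⟩ := h; ⟨v, hf, he⟩

section LocalMax

variable (G : SimpleGraph V) [DecidableRel G.Adj]

theorem rk_of_mem (σ : EdgeRanking G) {e : Sym2 V} (he : e ∈ G.edgeFinset) :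
    rk G σ e = σ ⟨e, he⟩ :=
  dif_pos he

theorem rk_injOn (σ : EdgeRanking G) : Set.InjOn (rk G σ) G.edgeFinset := by
  intro e he f hf h
  rw [rk_of_mem G σ he, rk_of_mem G σ hf] at h
  exact congrArg Subtype.val (σ.injective (Fin.ext h))

theorem exists_locMaxInR (σ : EdgeRanking G) {E : Finset (Sym2 V)} (hE : E ⊆ G.edgeFinset)
    (hne : E.Nonempty) : ∃ e, locMaxInR G σ E e := by
  obtain ⟨e, he, hmax⟩ := E.exists_max_image (rk G σ) hne
  exact ⟨e, he, fun f hf hfe _ =>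
    (hmax f hf).lt_of_ne fun h => hfe (rk_injOn G σ (hE hf) (hE he) h)⟩

theorem locMaxInR_iff_isArgmaxOn {E : Finset (Sym2 V)} (hE : E ⊆ G.edgeFinset) {e : Sym2 V}
    (he : e ∈ E) (σ : EdgeRanking G) :
    locMaxInR G σ E e ↔
      IsArgmaxOn σ ({f ∈ E | shareEndpoint e f}.subtype (· ∈ G.edgeFinset))
        ⟨e, hE he⟩ := by
  constructor
  · rintro ⟨-, hmax⟩ ⟨f, hfG⟩ hf hfe
    obtain ⟨hfE, hshare⟩ := mem_filter.1 (mem_subtype.1 hf)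
    have := hmax f hfE (fun h => hfe (Subtype.ext h)) hshare
    rwa [rk_of_mem G σ hfG, rk_of_mem G σ (hE he)] at this
  · intro hmax
    refine ⟨he, fun f hf hfe hshare => ?_⟩
    rw [rk_of_mem G σ (hE hf), rk_of_mem G σ (hE he)]
    exact hmax ⟨f, hE hf⟩ (mem_subtype.2 (mem_filter.2 ⟨hf, hshare⟩))
      fun h => hfe (congrArg Subtype.val h)

theorem card_locMaxInR_mul_card {E : Finset (Sym2 V)} (hE : E ⊆ G.edgeFinset) {e : Sym2 V}
    (he : e ∈ E) :
    #{σ : EdgeRanking G | locMaxInR G σ E e} * #{f ∈ E | shareEndpoint e f} =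
      Fintype.card (EdgeRanking G) := by
  have hcard : #({f ∈ E | shareEndpoint e f}.subtype (· ∈ G.edgeFinset)) =
      #{f ∈ E | shareEndpoint e f} := by
    rw [card_subtype, filter_true_of_mem fun f hf => hE (mem_filter.1 hf).1]
  simp_rw [locMaxInR_iff_isArgmaxOn G hE he, ← hcard]
  exact card_isArgmaxOn_mul_card (mem_subtype.2 (mem_filter.2 ⟨he, shareEndpoint_self e⟩))

theorem locMaxInR.eq_of_shareEndpoint {σ : EdgeRanking G} {E : Finset (Sym2 V)} {e e' : Sym2 V}
    (h : locMaxInR G σ E e) (h' : locMaxInR G σ E e') (hshare : shareEndpoint e e') :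
    e = e' := by
  by_contra hne
  exact lt_asymm (h.2 e' h'.1 (Ne.symm hne) hshare) (h'.2 e h.1 hne (shareEndpoint_comm hshare))

theorem card_locMaxInR_shareEndpoint_le_two (σ : EdgeRanking G) (E : Finset (Sym2 V))
    (f : Sym2 V) : #{e ∈ E | locMaxInR G σ E e ∧ shareEndpoint e f} ≤ 2 := by
  induction f using Sym2.ind with | _ u v => ?_
  set endpoint : Sym2 V → V := fun e => if u ∈ e then u else v
  have endpoint_mem : ∀ e ∈ {e ∈ E | locMaxInR G σ E e ∧ shareEndpoint e s(u, v)},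
      endpoint e ∈ e := by
    intro e he
    obtain ⟨w, hwe, hw⟩ := (mem_filter.1 he).2.2
    by_cases hu : u ∈ e
    · simp [endpoint, hu]
    · rcases Sym2.mem_iff.1 hw with rfl | rfl
      · exact absurd hwe hu
      · simpa [endpoint, hu]
  calc _ ≤ #({u, v} : Finset V) := by
        refine card_le_card_of_injOn endpoint (fun e _ => ?_) fun e₁ h₁ e₂ h₂ h => ?_
        · by_cases hu : u ∈ e <;> simp [endpoint, hu]
        · exact (mem_filter.1 h₁).2.1.eq_of_shareEndpoint G (mem_filter.1 h₂).2.1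
            ⟨_, endpoint_mem e₁ h₁, h ▸ endpoint_mem e₂ h₂⟩
    _ ≤ 2 := card_le_two

theorem stepR_subset (σ : EdgeRanking G) (E : Finset (Sym2 V)) : stepR G σ E ⊆ E :=
  filter_subset _ _

theorem sum_card_shareEndpoint_le_two_mul_card_sdiff (σ : EdgeRanking G) (E : Finset (Sym2 V)) :
    ∑ e ∈ E with locMaxInR G σ E e, #{f ∈ E | shareEndpoint e f} ≤
      2 * #(E \ stepR G σ E) := by
  set L := {e ∈ E | locMaxInR G σ E e}
  have survivor (f : Sym2 V) (hf : f ∈ stepR G σ E) : #{e ∈ L | shareEndpoint e f} = 0 := by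
    refine card_eq_zero.2 (filter_eq_empty_iff.2 fun e he hshare => ?_)
    exact (mem_filter.1 hf).2 ⟨e, (mem_filter.1 he).2, hshare⟩
  calc ∑ e ∈ L, #{f ∈ E | shareEndpoint e f}
      = ∑ f ∈ E, #{e ∈ L | shareEndpoint e f} :=
        sum_card_bipartiteAbove_eq_sum_card_bipartiteBelow _
    _ = ∑ f ∈ E \ stepR G σ E, #{e ∈ L | shareEndpoint e f} := by
        rw [← sum_sdiff (stepR_subset G σ E), sum_eq_zero survivor, add_zero]
    _ ≤ ∑ f ∈ E \ stepR G σ E, 2 := by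
        refine sum_le_sum fun f _ => ?_
        rw [filter_filter]
        exact card_locMaxInR_shareEndpoint_le_two G σ E f
    _ = 2 * #(E \ stepR G σ E) := by rw [sum_const, smul_eq_mul, mul_comm]

theorem two_mul_sum_card_stepR_le {E : Finset (Sym2 V)} (hE : E ⊆ G.edgeFinset) :
    2 * ∑ σ : EdgeRanking G, #(stepR G σ E) ≤ Fintype.card (EdgeRanking G) * #E := by
  have removed : Fintype.card (EdgeRanking G) * #E ≤
      2 * ∑ σ : EdgeRanking G, #(E \ stepR G σ E) := calc
    Fintype.card (EdgeRanking G) * #E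
        = ∑ e ∈ E, #{σ : EdgeRanking G | locMaxInR G σ E e} *
            #{f ∈ E | shareEndpoint e f} := by
          rw [sum_congr rfl fun e he => card_locMaxInR_mul_card G hE he, sum_const,
            smul_eq_mul, mul_comm]
      _ = ∑ σ : EdgeRanking G, ∑ e ∈ E with locMaxInR G σ E e,
            #{f ∈ E | shareEndpoint e f} := by
          simp_rw [card_filter, sum_mul, boole_mul, sum_filter]
          exact sum_comm
      _ ≤ 2 * ∑ σ : EdgeRanking G, #(E \ stepR G σ E) := by
          rw [mul_sum]
          exact sum_le_sum fun σ _ => sum_card_shareEndpoint_le_two_mul_card_sdiff G σ E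
  have total : ∑ σ : EdgeRanking G, (#(E \ stepR G σ E) + #(stepR G σ E)) =
      Fintype.card (EdgeRanking G) * #E := by
    simp [card_sdiff_add_card_eq_card (stepR_subset G _ E)]
  rw [sum_add_distrib] at total
  linarith

end LocalMax

theorem sum_fun_fin_succ {α M : Type*} [Fintype α] [DecidableEq α] [AddCommMonoid M] {n : ℕ}
    (F : (Fin (n + 1) → α) → M) :
    ∑ σs : Fin (n + 1) → α, F σs = ∑ x : α, ∑ p : Fin n → α, F (Fin.snoc p x) := by
  rw [← Fintype.sum_prod_type']
  exact (Fintype.sum_equiv (Fin.snocEquiv fun _ => α) _ F fun _ => rfl).symm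

section Rounds

variable (G : SimpleGraph V) [DecidableRel G.Adj]

theorem EseqR_antitone (σs : ℕ → EdgeRanking G) : Antitone (EseqR G σs) :=
  antitone_nat_of_succ_le fun n => stepR_subset G (σs n) _

theorem EseqR_subset (σs : ℕ → EdgeRanking G) (k : ℕ) : EseqR G σs k ⊆ G.edgeFinset :=
  EseqR_antitone G σs k.zero_le

theorem EseqR_congr {σs σs' : ℕ → EdgeRanking G} {k : ℕ} (h : ∀ i < k, σs i = σs' i) :
    EseqR G σs k = EseqR G σs' k := by
  induction k with
  | zero => rfl
  | succ n ih =>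
    rw [EseqR, EseqR, ih fun i hi => h i (by omega), h n n.lt_succ_self]

omit [DecidableEq V] in
theorem pad_snoc_of_lt {n : ℕ} (p : Fin n → EdgeRanking G) (x : EdgeRanking G) {i : ℕ}
    (hi : i < n) : pad G (Fin.snoc p x) i = pad G p i := by
  simp only [pad, dif_pos hi, dif_pos (Nat.lt_succ_of_lt hi)]
  exact Fin.snoc_castSucc (i := ⟨i, hi⟩) ..

omit [DecidableEq V] in
theorem pad_snoc_self {n : ℕ} (p : Fin n → EdgeRanking G) (x : EdgeRanking G) :
    pad G (Fin.snoc p x) n = x := by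
  simp only [pad, dif_pos n.lt_succ_self]
  exact Fin.snoc_last ..

theorem EseqR_pad_snoc_of_le {n : ℕ} (p : Fin n → EdgeRanking G) (x : EdgeRanking G) {k : ℕ}
    (hk : k ≤ n) : EseqR G (pad G (Fin.snoc p x)) k = EseqR G (pad G p) k :=
  EseqR_congr G fun _ hi => pad_snoc_of_lt G p x (hi.trans_le hk)

theorem EseqR_pad_snoc_succ {n : ℕ} (p : Fin n → EdgeRanking G) (x : EdgeRanking G) :
    EseqR G (pad G (Fin.snoc p x)) (n + 1) = stepR G x (EseqR G (pad G p) n) := by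
  rw [EseqR, pad_snoc_self, EseqR_pad_snoc_of_le G p x le_rfl]

theorem sum_card_EseqR_pad_succ_of_le {n k : ℕ} (hk : k ≤ n) :
    ∑ σs : Fin (n + 1) → EdgeRanking G, #(EseqR G (pad G σs) k) =
      Fintype.card (EdgeRanking G) * ∑ p : Fin n → EdgeRanking G, #(EseqR G (pad G p) k) := by
  simp_rw [sum_fun_fin_succ, EseqR_pad_snoc_of_le G _ _ hk]
  rw [sum_const, card_univ, smul_eq_mul]

theorem two_mul_sum_card_EseqR_pad_succ_le (n : ℕ) :
    2 * ∑ σs : Fin (n + 1) → EdgeRanking G, #(EseqR G (pad G σs) (n + 1)) ≤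
      Fintype.card (EdgeRanking G) * ∑ p : Fin n → EdgeRanking G, #(EseqR G (pad G p) n) := by
  simp_rw [sum_fun_fin_succ, EseqR_pad_snoc_succ]
  rw [sum_comm, mul_sum, mul_sum]
  exact sum_le_sum fun p _ => two_mul_sum_card_stepR_le G (EseqR_subset G _ n)

theorem two_pow_mul_sum_card_EseqR_pad_le {n k : ℕ} (hk : k ≤ n) :
    2 ^ k * ∑ σs : Fin n → EdgeRanking G, #(EseqR G (pad G σs) k) ≤
      #G.edgeFinset * Fintype.card (EdgeRanking G) ^ n := by
  induction n generalizing k with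
  | zero => simp [Nat.le_zero.1 hk, EseqR]
  | succ n ih =>
    set N := Fintype.card (EdgeRanking G)
    rcases hk.lt_or_eq with hk | rfl
    · rw [sum_card_EseqR_pad_succ_of_le G (Nat.lt_succ_iff.1 hk)]
      calc _ = N * (2 ^ k * ∑ p : Fin n → EdgeRanking G, #(EseqR G (pad G p) k)) := by ring
        _ ≤ N * (#G.edgeFinset * N ^ n) :=
          Nat.mul_le_mul_left _ (ih (Nat.lt_succ_iff.1 hk))
        _ = _ := by ring
    · calc _ = 2 ^ n * (2 * ∑ σs : Fin (n + 1) → EdgeRanking G,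
                #(EseqR G (pad G σs) (n + 1))) := by ring
        _ ≤ 2 ^ n * (N * ∑ p : Fin n → EdgeRanking G, #(EseqR G (pad G p) n)) :=
          Nat.mul_le_mul_left _ (two_mul_sum_card_EseqR_pad_succ_le G n)
        _ = N * (2 ^ n * ∑ p : Fin n → EdgeRanking G, #(EseqR G (pad G p) n)) := by ring
        _ ≤ N * (#G.edgeFinset * N ^ n) :=
          Nat.mul_le_mul_left _ (ih le_rfl)
        _ = _ := by ring

end Rounds

section Termination

variable (G : SimpleGraph V) [DecidableRel G.Adj]

theorem card_stepR_le_pred (σ : EdgeRanking G) {E : Finset (Sym2 V)} (hE : E ⊆ G.edgeFinset) :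
    #(stepR G σ E) ≤ #E - 1 := by
  rcases E.eq_empty_or_nonempty with rfl | hne
  · simp [stepR]
  obtain ⟨e, he⟩ := exists_locMaxInR G σ hE hne
  have hlt : #(stepR G σ E) < #E := by
    refine card_lt_card ((ssubset_iff_of_subset (stepR_subset G σ E)).2 ⟨e, he.1, ?_⟩)
    exact fun hmem => (mem_filter.1 hmem).2 ⟨e, he, shareEndpoint_self e⟩
  omega

theorem card_EseqR_le (σs : ℕ → EdgeRanking G) (k : ℕ) :
    #(EseqR G σs k) ≤ #G.edgeFinset - k := by
  induction k with
  | zero => exact le_rfl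
  | succ n ih =>
    have := card_stepR_le_pred G (σs n) (EseqR_subset G σs n)
    rw [EseqR]
    omega

theorem EseqR_card_edgeFinset (σs : ℕ → EdgeRanking G) : EseqR G σs #G.edgeFinset = ∅ :=
  card_eq_zero.1 (Nat.le_zero.1 ((card_EseqR_le G σs _).trans_eq (Nat.sub_self _)))

theorem nRounds_le (σs : ℕ → EdgeRanking G) : nRounds G σs ≤ #G.edgeFinset :=
  Nat.sInf_le (EseqR_card_edgeFinset G σs)

theorem EseqR_eq_empty_iff (σs : ℕ → EdgeRanking G) {k : ℕ} :
    EseqR G σs k = ∅ ↔ nRounds G σs ≤ k := by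
  refine ⟨fun h => Nat.sInf_le h, fun h => subset_empty.1 ?_⟩
  rw [← Nat.sInf_mem (s := {k | EseqR G σs k = ∅}) ⟨_, EseqR_card_edgeFinset G σs⟩]
  exact EseqR_antitone G σs h

theorem nRounds_eq_card_filter (σs : ℕ → EdgeRanking G) :
    nRounds G σs = #{k ∈ range #G.edgeFinset | 1 ≤ #(EseqR G σs k)} := by
  have := nRounds_le G σs
  have hfilter : {k ∈ range #G.edgeFinset | 1 ≤ #(EseqR G σs k)} = range (nRounds G σs) := by
    ext k
    simp only [mem_filter, mem_range, one_le_card, nonempty_iff_ne_empty, ne_eq,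
      EseqR_eq_empty_iff, not_le]
    omega
  rw [hfilter, card_range]

theorem sum_nRounds_pad_eq (n : ℕ) :
    ∑ σs : Fin n → EdgeRanking G, nRounds G (pad G σs) =
      ∑ k ∈ range #G.edgeFinset,
        #{σs : Fin n → EdgeRanking G | 1 ≤ #(EseqR G (pad G σs) k)} := by
  simp_rw [nRounds_eq_card_filter, card_filter]
  exact sum_comm

end Termination

theorem sum_range_min_one_mul_inv_two_pow_le (m : ℕ) :
    ∑ k ∈ range m, min 1 ((m : ℝ) * 2⁻¹ ^ k) ≤ Real.logb 2 m + 2 := by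
  rcases m.eq_zero_or_pos with rfl | hm
  · norm_num
  set L := Real.logb 2 m
  have hL : 0 ≤ L := Real.logb_nonneg one_lt_two (by exact_mod_cast hm)
  set t := ⌈L⌉₊
  have head : ∑ k ∈ range t, min 1 ((m : ℝ) * 2⁻¹ ^ k) ≤ t := by
    simpa using sum_le_sum fun k (_ : k ∈ range t) => min_le_left 1 ((m : ℝ) * 2⁻¹ ^ k)
  have tail : ∑ j ∈ range m, min 1 ((m : ℝ) * 2⁻¹ ^ (t + j)) ≤ 2 * (m * 2⁻¹ ^ t) :=
    calc _ ≤ ∑ j ∈ range m, (m : ℝ) * 2⁻¹ ^ t * (1 / 2) ^ j :=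
        sum_le_sum fun j _ => (min_le_right _ _).trans_eq (by rw [pow_add]; ring)
      _ = m * 2⁻¹ ^ t * ∑ j ∈ range m, (1 / 2 : ℝ) ^ j := (mul_sum ..).symm
      _ ≤ m * 2⁻¹ ^ t * 2 := by gcongr; exact sum_geometric_two_le m
      _ = 2 * (m * 2⁻¹ ^ t) := by ring
  -- Bernoulli: `2 ^ p ≤ 1 + p` for `p = 1 + L - t ∈ [0, 1]`.
  have bernoulli : 2 * ((m : ℝ) * 2⁻¹ ^ t) ≤ 2 + L - t := by
    have hp := rpow_one_add_le_one_add_mul_self (s := 1) (p := 1 + L - t) (by norm_num)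
      (by linarith [Nat.ceil_lt_add_one hL]) (by linarith [Nat.le_ceil L])
    have hm : (m : ℝ) = 2 ^ L := (Real.rpow_logb two_pos one_lt_two.ne' (by positivity)).symm
    rw [one_add_one_eq_two, Real.rpow_sub two_pos, Real.rpow_add two_pos, Real.rpow_one,
      Real.rpow_natCast, ← hm] at hp
    rw [inv_pow, ← div_eq_mul_inv, mul_div_assoc']
    linarith
  calc ∑ k ∈ range m, min 1 ((m : ℝ) * 2⁻¹ ^ k)
      ≤ ∑ k ∈ range (t + m), min 1 ((m : ℝ) * 2⁻¹ ^ k) :=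
        sum_le_sum_of_subset_of_nonneg (range_subset_range.2 (by omega)) fun _ _ _ => by positivity
    _ = ∑ k ∈ range t, min 1 ((m : ℝ) * 2⁻¹ ^ k) +
          ∑ j ∈ range m, min 1 ((m : ℝ) * 2⁻¹ ^ (t + j)) :=
        sum_range_add ..
    _ ≤ t + (2 + L - t) := add_le_add head (tail.trans bernoulli)
    _ = L + 2 := by ring

section Probability

variable (G : SimpleGraph V) [DecidableRel G.Adj]

theorem card_edgeRanking_pos : 0 < Fintype.card (EdgeRanking G) :=
  Fintype.card_pos_iff.2 ⟨Fintype.equivFinOfCardEq (Fintype.card_coe _)⟩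

theorem card_fun_fin_edgeRanking (n : ℕ) :
    (Fintype.card (Fin n → EdgeRanking G) : ℝ) = (Fintype.card (EdgeRanking G) : ℝ) ^ n := by
  rw [Fintype.card_fun, Fintype.card_fin, Nat.cast_pow]

theorem card_EseqR_pad_nonempty_le {n k : ℕ} (hk : k ≤ n) :
    (#{σs : Fin n → EdgeRanking G | 1 ≤ #(EseqR G (pad G σs) k)} : ℝ) ≤
      (Fintype.card (EdgeRanking G) : ℝ) ^ n * min 1 ((#G.edgeFinset : ℝ) * 2⁻¹ ^ k) := by
  set bad : Finset (Fin n → EdgeRanking G) := {σs | 1 ≤ #(EseqR G (pad G σs) k)}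
  rw [mul_min_of_nonneg _ _ (by positivity), mul_one]
  refine le_min ?_ ?_
  · rw [← card_fun_fin_edgeRanking]
    exact_mod_cast card_le_univ bad
  · have markov : #bad ≤ ∑ σs : Fin n → EdgeRanking G, #(EseqR G (pad G σs) k) := by
      rw [card_filter]
      exact sum_le_sum fun σs _ => by split_ifs <;> omega
    have h : (2 : ℝ) ^ k * #bad ≤ #G.edgeFinset * (Fintype.card (EdgeRanking G) : ℝ) ^ n := by
      exact_mod_cast (Nat.mul_le_mul_left _ markov).trans (two_pow_mul_sum_card_EseqR_pad_le G hk)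
    rw [inv_pow, ← div_eq_mul_inv, mul_div_assoc', le_div_iff₀ (by positivity)]
    linarith

end Probability

/-- Consider the iterated local max algorithm on a finite simple
graph `G` with `m` edges, with fresh uniformly random rankings in each round. Then
for every `k ≥ 0` the probability that the algorithm has not terminated after `k`
rounds satisfies `P(|E(G_k)| ≥ 1) ≤ m · 2^{-k}`; in particular the expected number
of rounds until the edge set is empty is at most `log₂ m + 2`. (The number of
rounds is determined by the rankings of the first `m` rounds, since the algorithm
always terminates within `m` rounds.) -/
theorem stmt16 (G : SimpleGraph V) [DecidableRel G.Adj] :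
    (∀ k : ℕ,
      ((Finset.univ.filter fun σs : Fin k → EdgeRanking G =>
            1 ≤ (EseqR G (pad G σs) k).card).card : ℝ) /
          (Fintype.card (Fin k → EdgeRanking G) : ℝ) ≤
        (G.edgeFinset.card : ℝ) * (2 : ℝ)⁻¹ ^ k) ∧
    (∑ σs : Fin G.edgeFinset.card → EdgeRanking G, (nRounds G (pad G σs) : ℝ)) /
        (Fintype.card (Fin G.edgeFinset.card → EdgeRanking G) : ℝ) ≤
      Real.logb 2 (G.edgeFinset.card : ℝ) + 2 := by
  set m := #G.edgeFinset
  set N := (Fintype.card (EdgeRanking G) : ℝ)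
  have hN : 0 < N := Nat.cast_pos.2 (card_edgeRanking_pos G)
  refine ⟨fun k => ?_, ?_⟩
  · rw [card_fun_fin_edgeRanking, div_le_iff₀ (by positivity), mul_comm]
    exact (card_EseqR_pad_nonempty_le G le_rfl).trans (by gcongr; exact min_le_right _ _)
  · rw [card_fun_fin_edgeRanking, div_le_iff₀ (by positivity)]
    calc ∑ σs : Fin m → EdgeRanking G, (nRounds G (pad G σs) : ℝ)
        = ∑ k ∈ range m,
            (#{σs : Fin m → EdgeRanking G | 1 ≤ #(EseqR G (pad G σs) k)} : ℝ) := by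
          exact_mod_cast sum_nRounds_pad_eq G m
      _ ≤ ∑ k ∈ range m, N ^ m * min 1 ((m : ℝ) * 2⁻¹ ^ k) :=
          sum_le_sum fun k hk => card_EseqR_pad_nonempty_le G (mem_range.1 hk).le
      _ = N ^ m * ∑ k ∈ range m, min 1 ((m : ℝ) * 2⁻¹ ^ k) := (mul_sum ..).symm
      _ ≤ (Real.logb 2 m + 2) * N ^ m := by
          rw [mul_comm]; gcongr; exact sum_range_min_one_mul_inv_two_pow_le m
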